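/- arXiv:2110.15798 — 4 statements merged into one kernel-verified Lean document; each statement's English description precedes it below -/
import Mathlib

section
/- For every n ∈ ℕ there exists y ∈ B_S(n) such that γ_S(n) · Card(I_y) ≤ Card(D)², where I_y = y⁻¹D ∩ D. -/
open Set Filter

/-- The ball of radius `n` in the word metric: elements expressible as a product
of at most `n` elements of `S`. -/
def wordBall {G : Type*} [Group G] (S : Set G) (n : ℕ) : Set G :=
  {x | ∃ l : List G, l.length ≤ n ∧ (∀ s ∈ l, s ∈ S) ∧ l.prod = x}

/-- The growth function `γ_S(n) = Card(B_S(n))`. -/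
noncomputable def growth {G : Type*} [Group G] (S : Set G) (n : ℕ) : ℕ :=
  (wordBall S n).ncard

/-- The word norm `‖x‖_S`. -/
noncomputable def wordNorm {G : Type*} [Group G] (S : Set G) (x : G) : ℕ :=
  sInf {n | x ∈ wordBall S n}

/-- The reverse growth function `φ_S(t) = min {n | γ_S(n) ≥ t}`. -/
noncomputable def phiS {G : Type*} [Group G] (S : Set G) (t : ℝ) : ℕ :=
  sInf {n | t ≤ (growth S n : ℝ)}

/-- The interior boundary `∂_S D`. -/
def intBoundary {G : Type*} [Group G] (S : Set G) (D : Set G) : Set G :=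
  {x ∈ D | ∃ s ∈ S, s * x ∉ D}

/-- The exterior boundary `∂'_S D`. -/
def extBoundary {G : Type*} [Group G] (S : Set G) (D : Set G) : Set G :=
  {x | x ∉ D ∧ ∃ s ∈ S, s * x ∈ D}

/-! Summing over `x ∈ D` instead of `y`, each `x` contributes at most `Card(D)` elements `y` with
`y * x ∈ D`, so `∑_{y ∈ B} Card(I_y) ≤ Card(D)²` for every finite `B`; take `y ∈ B_S(n)` minimising
`Card(I_y)`. -/

theorem Finset.sum_card_filter_mul_mem_le {G : Type*} [Mul G] [IsRightCancelMul G] [DecidableEq G]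
    (B D : Finset G) : ∑ y ∈ B, {x ∈ D | y * x ∈ D}.card ≤ D.card ^ 2 := by
  calc ∑ y ∈ B, {x ∈ D | y * x ∈ D}.card
      = ∑ x ∈ D, {y ∈ B | y * x ∈ D}.card := by
        simp only [Finset.card_filter]
        exact Finset.sum_comm
    _ ≤ ∑ _x ∈ D, D.card :=
        Finset.sum_le_sum fun x _ ↦ Finset.card_le_card_of_injOn (· * x)
          (fun _ hy ↦ (Finset.mem_filter.1 hy).2) (mul_left_injective x).injOn
    _ = D.card ^ 2 := by rw [Finset.sum_const, smul_eq_mul, sq]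

theorem Finset.exists_card_mul_card_filter_mul_mem_le {G : Type*} [Mul G] [IsRightCancelMul G]
    [DecidableEq G] {B : Finset G} (hB : B.Nonempty) (D : Finset G) :
    ∃ y ∈ B, B.card * {x ∈ D | y * x ∈ D}.card ≤ D.card ^ 2 := by
  obtain ⟨y, hy, hmin⟩ := B.exists_min_image (fun y ↦ {x ∈ D | y * x ∈ D}.card) hB
  exact ⟨y, hy, (B.card_nsmul_le_sum _ _ hmin).trans (B.sum_card_filter_mul_mem_le D)⟩

theorem one_mem_wordBall {G : Type*} [Group G] (S : Set G) (n : ℕ) : (1 : G) ∈ wordBall S n :=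
  ⟨[], by simp⟩

theorem stmt_2_general {G : Type*} [Group G] (S : Set G)
    (D : Set G) (hDfin : D.Finite) (n : ℕ) :
    ∃ y ∈ wordBall S n, growth S n * ({x ∈ D | y * x ∈ D}).ncard ≤ D.ncard ^ 2 := by
  classical
  by_cases hB : (wordBall S n).Finite
  · obtain ⟨y, hy, hle⟩ := Finset.exists_card_mul_card_filter_mul_mem_le
      ⟨1, hB.mem_toFinset.2 (one_mem_wordBall S n)⟩ hDfin.toFinset
    refine ⟨y, hB.mem_toFinset.1 hy, ?_⟩
    have hI : {x ∈ D | y * x ∈ D} = ↑{x ∈ hDfin.toFinset | y * x ∈ hDfin.toFinset} := by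
      ext x
      simp
    rwa [growth, Set.ncard_eq_toFinset_card _ hB, hI, Set.ncard_coe_finset,
      Set.ncard_eq_toFinset_card _ hDfin]
  · refine ⟨1, one_mem_wordBall S n, ?_⟩
    simp [growth, Set.Infinite.ncard hB]

theorem stmt_2 {G : Type*} [Group G] (S : Set G) (hSfin : S.Finite)
    (hSsym : ∀ s ∈ S, s⁻¹ ∈ S) (hSgen : Subgroup.closure S = ⊤)
    (D : Set G) (hDfin : D.Finite) (hDne : D.Nonempty) (n : ℕ) :
    ∃ y ∈ wordBall S n, growth S n * ({x ∈ D | y * x ∈ D}).ncard ≤ D.ncard ^ 2 :=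
  stmt_2_general S D hDfin n
end

section
/- If γ_S(n) ≥ g(n+1) for all n ∈ ℕ for an increasing homeomorphism g : ℝ₊ → ℝ₊, then for every nonempty finite D ⊆ Γ and every λ > 1: Card(∂_S D) ≥ (1 − 1/λ)·Card(D)/g⁻¹(λ·Card(D)). -/
open Set Filter

/-!
Coulhon–Saloff-Coste. The number of points of `D` that `γ` pushes out of `D` is subadditive
in `γ` (up to a translation) and is at most `|∂_S D|` for a generator, so every `γ ∈ B_S(n)`
pushes at most `n |∂_S D|` points out. For fixed `x ∈ D` at most `|D|` elements `γ` keep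
`γ x` in `D`. Counting pairs in `B_S(n) × D` gives `(1 - |D| / γ_S(n)) |D| ≤ n |∂_S D|`, and
the growth bound provides `n ≤ g⁻¹(λ |D|)` with `γ_S(n) ≥ λ |D|`.
-/

section Isoperimetry

open Finset

variable {G : Type*} [Group G] {S : Set G}

section exits

variable [DecidableEq G]

def exits (D : Finset G) (g : G) : Finset G := {x ∈ D | g * x ∉ D}

lemma exits_one (D : Finset G) : exits D 1 = ∅ := by
  simp [exits]

lemma exits_mul_subset (D : Finset G) (h k : G) :
    exits D (h * k) ⊆ exits D k ∪ (exits D h).image (k⁻¹ * ·) := by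
  intro x hx
  rw [exits, mem_filter, mul_assoc] at hx
  by_cases hkx : k * x ∈ D
  · exact mem_union_right _
      (mem_image.mpr ⟨k * x, mem_filter.mpr ⟨hkx, hx.2⟩, inv_mul_cancel_left k x⟩)
  · exact mem_union_left _ (mem_filter.mpr ⟨hx.1, hkx⟩)

lemma card_exits_mul_le (D : Finset G) (h k : G) :
    #(exits D (h * k)) ≤ #(exits D h) + #(exits D k) :=
  calc #(exits D (h * k))
      ≤ #(exits D k ∪ (exits D h).image (k⁻¹ * ·)) := card_le_card (exits_mul_subset D h k)
    _ ≤ #(exits D k) + #((exits D h).image (k⁻¹ * ·)) := card_union_le _ _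
    _ ≤ #(exits D k) + #(exits D h) := Nat.add_le_add_left card_image_le _
    _ = #(exits D h) + #(exits D k) := add_comm _ _

lemma card_exits_le_ncard_intBoundary (D : Finset G) {s : G} (hs : s ∈ S) :
    #(exits D s) ≤ (intBoundary S ↑D).ncard := by
  rw [← Set.ncard_coe_finset]
  refine Set.ncard_le_ncard (fun x hx => ?_) (D.finite_toSet.subset fun x hx => hx.1)
  simp only [exits, coe_filter, Set.mem_ofPred_eq] at hx
  exact ⟨hx.1, s, hs, hx.2⟩

lemma card_exits_list_prod_le (D : Finset G) {l : List G} (hl : ∀ s ∈ l, s ∈ S) :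
    #(exits D l.prod) ≤ l.length * (intBoundary S ↑D).ncard := by
  induction l with
  | nil => simp [exits_one]
  | cons s t ih =>
    rw [List.prod_cons, List.length_cons]
    calc #(exits D (s * t.prod))
        ≤ #(exits D s) + #(exits D t.prod) := card_exits_mul_le D s t.prod
      _ ≤ (intBoundary S ↑D).ncard + t.length * (intBoundary S ↑D).ncard :=
          add_le_add (card_exits_le_ncard_intBoundary D (hl s (by simp)))
            (ih fun x hx => hl x (by simp [hx]))
      _ = (t.length + 1) * (intBoundary S ↑D).ncard := by ring

lemma card_exits_le_of_mem_wordBall (D : Finset G) {n : ℕ} {g : G} (hg : g ∈ wordBall S n) :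
    #(exits D g) ≤ n * (intBoundary S ↑D).ncard := by
  obtain ⟨l, hl, hlS, rfl⟩ := hg
  exact (card_exits_list_prod_le D hlS).trans (Nat.mul_le_mul_right _ hl)

lemma card_mul_card_le_add_sum_card_exits (B D : Finset G) :
    #B * #D ≤ #D * #D + ∑ g ∈ B, #(exits D g) := by
  have hstay : ∑ g ∈ B, #{x ∈ D | g * x ∈ D} ≤ #D * #D := by
    calc ∑ g ∈ B, #{x ∈ D | g * x ∈ D}
        = ∑ x ∈ D, #{g ∈ B | g * x ∈ D} :=
          sum_card_bipartiteAbove_eq_sum_card_bipartiteBelow (fun g x => g * x ∈ D)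
      _ ≤ ∑ _x ∈ D, #D := sum_le_sum fun x _ =>
          card_le_card_of_injOn (· * x) (fun g hg => (mem_filter.mp hg).2)
            fun _ _ _ _ => mul_right_cancel
      _ = #D * #D := by rw [sum_const, smul_eq_mul]
  calc #B * #D = ∑ g ∈ B, (#{x ∈ D | g * x ∈ D} + #(exits D g)) := by
        rw [← smul_eq_mul, ← sum_const]
        exact sum_congr rfl fun g _ => (card_filter_add_card_filter_not _).symm
    _ ≤ #D * #D + ∑ g ∈ B, #(exits D g) := by
        rw [sum_add_distrib]; gcongr

end exits

lemma one_sub_div_growth_mul_card_le_mul_ncard_intBoundary (D : Finset G) {n : ℕ}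
    (hB : (wordBall S n).Finite) :
    (1 - #D / (growth S n : ℝ)) * #D ≤ n * (intBoundary S ↑D).ncard := by
  classical
  set B := hB.toFinset
  have hBcard : #B = growth S n := (Set.ncard_eq_toFinset_card _ hB).symm
  have hexits : ∑ g ∈ B, #(exits D g) ≤ #B * (n * (intBoundary S ↑D).ncard) := by
    rw [← smul_eq_mul, ← sum_const]
    exact sum_le_sum fun g hg => card_exits_le_of_mem_wordBall D (hB.mem_toFinset.mp hg)
  have hcount :
      (growth S n : ℝ) * #D ≤ #D * #D + growth S n * (n * (intBoundary S ↑D).ncard) := by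
    rw [← hBcard]
    exact_mod_cast (card_mul_card_le_add_sum_card_exits B D).trans (Nat.add_le_add_left hexits _)
  have hpos : (0 : ℝ) < growth S n := by
    rw [← hBcard]
    exact_mod_cast card_pos.mpr ⟨1, hB.mem_toFinset.mpr ⟨[], by simp, by simp, by simp⟩⟩
  rw [sub_mul, one_mul, sub_le_iff_le_add, div_mul_eq_mul_div, add_div' _ _ _ hpos.ne',
    le_div_iff₀ hpos]
  linarith

end Isoperimetry

theorem stmt_9_general {G : Type*} [Group G] (S : Set G)
    (g ginv : ℝ → ℝ)
    (hg_mono : StrictMonoOn g (Ici 0))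
    (hg_surj : SurjOn g (Ici 0) (Ici 0))
    (hinv_left : ∀ r ∈ Ici (0 : ℝ), ginv (g r) = r)
    (hgrowth : ∀ n : ℕ, g (n + 1) ≤ (growth S n : ℝ)) :
    ∀ (D : Set G), D.Finite → D.Nonempty → ∀ lam : ℝ, 1 < lam →
      ((intBoundary S D).ncard : ℝ) ≥
        (1 - 1 / lam) * (D.ncard : ℝ) / ginv (lam * (D.ncard : ℝ)) := by
  intro D hD hDne lam hlam
  lift D to Finset G using hD
  have hD0 : (0 : ℝ) < D.card := by
    exact_mod_cast Finset.card_pos.mpr (Finset.coe_nonempty.mp hDne)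
  have hlam0 : 0 < lam := by linarith
  rw [Set.ncard_coe_finset]
  obtain ⟨r, hr0, hgr⟩ := hg_surj (mem_Ici.mpr (by positivity : (0 : ℝ) ≤ lam * D.card))
  rw [← hgr, hinv_left r hr0]
  set n := ⌊r⌋₊
  have hgrowth_n : lam * D.card ≤ growth S n :=
    hgr ▸ (hg_mono.monotoneOn hr0 (mem_Ici.mpr (by positivity))
      (Nat.lt_floor_add_one r).le).trans (hgrowth n)
  have hγ : (0 : ℝ) < growth S n := (by positivity : (0 : ℝ) < lam * D.card).trans_le hgrowth_n
  have hball : (wordBall S n).Finite := Set.finite_of_ncard_pos (by exact_mod_cast hγ)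
  have hratio : D.card / (growth S n : ℝ) ≤ 1 / lam := by
    rw [div_le_div_iff₀ hγ hlam0]
    linarith
  refine div_le_of_le_mul₀ hr0 (by positivity) ?_
  calc (1 - 1 / lam) * D.card ≤ (1 - D.card / (growth S n : ℝ)) * D.card := by gcongr
    _ ≤ n * (intBoundary S ↑D).ncard :=
        one_sub_div_growth_mul_card_le_mul_ncard_intBoundary D hball
    _ ≤ (intBoundary S ↑D).ncard * r := by
        rw [mul_comm]; gcongr; exact Nat.floor_le hr0

theorem stmt_9 {G : Type*} [Group G] [Infinite G] (S : Set G) (hSfin : S.Finite)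
    (hSsym : ∀ s ∈ S, s⁻¹ ∈ S) (hSgen : Subgroup.closure S = ⊤)
    (g ginv : ℝ → ℝ)
    (hg_mono : StrictMonoOn g (Ici 0)) (hg_cont : ContinuousOn g (Ici 0))
    (hg_zero : g 0 = 0)
    (hg_maps : MapsTo g (Ici 0) (Ici 0)) (hg_surj : SurjOn g (Ici 0) (Ici 0))
    (hinv_left : ∀ r ∈ Ici (0 : ℝ), ginv (g r) = r)
    (hinv_right : ∀ t ∈ Ici (0 : ℝ), g (ginv t) = t)
    (hgrowth : ∀ n : ℕ, g (n + 1) ≤ (growth S n : ℝ)) :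
    ∀ (D : Set G), D.Finite → D.Nonempty → ∀ lam : ℝ, 1 < lam →
      ((intBoundary S D).ncard : ℝ) ≥
        (1 - 1 / lam) * (D.ncard : ℝ) / ginv (lam * (D.ncard : ℝ)) :=
  stmt_9_general S g ginv hg_mono hg_surj hinv_left hgrowth
end

section
/- Suppose γ_S(n−1) ≥ C·n^d for all integers n ≥ 1, where C > 0 and d ≥ 1 are real constants. Then every nonempty finite subset D ⊆ Γ satisfies Card(∂_S D) ≥ (C^{1/d}·d/(d+1)^{(d+1)/d}) · Card(D)^{(d−1)/d}. -/
open Set Filter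

/- Proof idea: if `g` is a product of `n` generators, then every `x ∈ D` with `g x ∉ D` leaves `D`
through the interior boundary at one of the `n` steps, so `#{x ∈ D | g x ∉ D} ≤ n · |∂D|`.
On the other hand `g x ∈ D` happens for at most `|D|²` pairs `(g, x)`, hence
`γ(n) |D| ≤ |D|² + γ(n) n |∂D|`. Taking `n = ⌊((d + 1) |D| / C) ^ (1 / d)⌋`, the growth hypothesis
gives `γ(n) ≥ (d + 1) |D|`, and therefore `|∂D| ≥ d |D| / ((d + 1) n)`; the constant comes from
`n ≤ ((d + 1) |D| / C) ^ (1 / d)`. -/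

section WordGrowth

variable {G : Type*} [Group G] {S D : Set G}

theorem ncard_setOf_list_prod_mul_notMem_le (hD : D.Finite) {l : List G} (hl : ∀ s ∈ l, s ∈ S) :
    {x ∈ D | l.prod * x ∉ D}.ncard ≤ l.length * (intBoundary S D).ncard := by
  induction l with
  | nil => simp
  | cons s l ih =>
    have hsub : {x ∈ D | (s :: l).prod * x ∉ D} ⊆
        {x ∈ D | l.prod * x ∉ D} ∪ {x ∈ D | l.prod * x ∈ intBoundary S D} := by
      rintro x ⟨hxD, hsx⟩
      by_cases hlx : l.prod * x ∈ D
      · exact Or.inr ⟨hxD, hlx, s, hl s List.mem_cons_self, by simpa [mul_assoc] using hsx⟩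
      · exact Or.inl ⟨hxD, hlx⟩
    have hfin : ∀ p : G → Prop, {x ∈ D | p x}.Finite := fun p => hD.subset fun x hx => hx.1
    have hexit : {x ∈ D | l.prod * x ∈ intBoundary S D}.ncard ≤ (intBoundary S D).ncard :=
      Set.ncard_le_ncard_of_injOn (l.prod * ·) (fun x hx => hx.2)
        (fun x _ y _ hxy => mul_left_cancel hxy) (hfin _)
    calc {x ∈ D | (s :: l).prod * x ∉ D}.ncard
        ≤ {x ∈ D | l.prod * x ∉ D}.ncard + {x ∈ D | l.prod * x ∈ intBoundary S D}.ncard :=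
          (Set.ncard_le_ncard hsub ((hfin _).union (hfin _))).trans (Set.ncard_union_le _ _)
      _ ≤ l.length * (intBoundary S D).ncard + (intBoundary S D).ncard :=
          add_le_add (ih fun t ht => hl t (List.mem_cons_of_mem s ht)) hexit
      _ = (s :: l).length * (intBoundary S D).ncard := by simp [add_mul]

theorem ncard_setOf_mul_notMem_le_of_mem_wordBall (hD : D.Finite) {n : ℕ} {g : G}
    (hg : g ∈ wordBall S n) :
    {x ∈ D | g * x ∉ D}.ncard ≤ n * (intBoundary S D).ncard := by
  obtain ⟨l, hlen, hl, rfl⟩ := hg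
  exact (ncard_setOf_list_prod_mul_notMem_le hD hl).trans (Nat.mul_le_mul_right _ hlen)

theorem ncard_mul_ncard_le_of_forall {B : Set G} (hB : B.Finite) (hD : D.Finite) {k : ℕ}
    (hk : ∀ g ∈ B, {x ∈ D | g * x ∉ D}.ncard ≤ k) :
    B.ncard * D.ncard ≤ D.ncard * D.ncard + B.ncard * k := by
  classical
  lift B to Finset G using hB
  lift D to Finset G using hD
  simp only [Set.ncard_coe_finset, Finset.mem_coe] at hk ⊢
  have hin : (B ×ˢ D |>.filter fun p => p.1 * p.2 ∈ D).card ≤ D.card * D.card := by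
    rw [← Finset.card_product]
    refine Finset.card_le_card_of_injOn (fun p => (p.2, p.1 * p.2)) ?_ ?_
    · intro p hp
      simp only [Finset.mem_coe, Finset.mem_filter, Finset.mem_product] at hp ⊢
      exact ⟨hp.1.2, hp.2⟩
    · intro p _ q _ hpq
      simp only [Prod.mk.injEq] at hpq
      exact Prod.ext (mul_right_cancel (hpq.1 ▸ hpq.2)) hpq.1
  have hout : (B ×ˢ D |>.filter fun p => p.1 * p.2 ∉ D).card ≤ B.card * k := by
    rw [Finset.card_filter, Finset.sum_product, ← smul_eq_mul, ← Finset.sum_const]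
    refine Finset.sum_le_sum fun g hg => ?_
    rw [← Finset.card_filter, ← Set.ncard_coe_finset, Finset.coe_filter]
    exact hk g hg
  calc B.card * D.card = (B ×ˢ D).card := (Finset.card_product _ _).symm
    _ = _ := (Finset.card_filter_add_card_filter_not _).symm
    _ ≤ _ := add_le_add hin hout

theorem mul_ncard_le_mul_ncard_intBoundary (hD : D.Finite) (hDne : D.Nonempty) {n : ℕ} {c : ℝ} (hc : 0 ≤ c) (hγ : (c + 1) * D.ncard ≤ growth S n) :
    c * D.ncard ≤ (c + 1) * (n * (intBoundary S D).ncard) := by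
  have hN : (0 : ℝ) < D.ncard := by exact_mod_cast (Set.ncard_pos hD).mpr hDne
  have hγpos : (0 : ℝ) < growth S n := by nlinarith
  -- the ball is finite because its `ncard` is positive (an infinite set has `ncard` zero)
  have hcount : (growth S n : ℝ) * D.ncard ≤
      D.ncard * D.ncard + growth S n * (n * (intBoundary S D).ncard) := by
    exact_mod_cast ncard_mul_ncard_le_of_forall
      (Set.finite_of_ncard_pos (by exact_mod_cast hγpos)) hD
      fun g hg => ncard_setOf_mul_notMem_le_of_mem_wordBall hD hg
  -- multiply `hcount` by `c + 1` and bound the `|D|²` term using `hγ`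
  refine le_of_mul_le_mul_left ?_ hγpos
  nlinarith

theorem le_growth_floor_rpow {C d : ℝ} (hC : 0 ≤ C) (hd : 0 < d)
    (hgrowth : ∀ n : ℕ, 1 ≤ n → C * (n : ℝ) ^ d ≤ (growth S (n - 1) : ℝ)) {y : ℝ} (hy : 0 ≤ y) :
    C * y ≤ growth S ⌊y ^ d⁻¹⌋₊ := by
  have hfloor : y ^ d⁻¹ ≤ ((⌊y ^ d⁻¹⌋₊ + 1 : ℕ) : ℝ) := by
    push_cast
    exact (Nat.lt_floor_add_one _).le
  calc C * y = C * (y ^ d⁻¹) ^ d := by rw [Real.rpow_inv_rpow hy hd.ne']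
    _ ≤ C * ((⌊y ^ d⁻¹⌋₊ + 1 : ℕ) : ℝ) ^ d := by gcongr
    _ ≤ growth S ⌊y ^ d⁻¹⌋₊ := by simpa using hgrowth (⌊y ^ d⁻¹⌋₊ + 1) (Nat.le_add_left 1 _)

end WordGrowth

theorem isoperimetric_constant_eq {C d N : ℝ} (hC : 0 < C) (hd : 0 < d) (hN : 0 < N) :
    C ^ (1 / d) * d / (d + 1) ^ ((d + 1) / d) * N ^ ((d - 1) / d) =
      d * N / ((d + 1) * ((d + 1) * N / C) ^ d⁻¹) := by
  have hd1 : 0 < d + 1 := by linarith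
  rw [show (d + 1) / d = 1 + d⁻¹ by field_simp, show (d - 1) / d = 1 - d⁻¹ by field_simp,
    Real.rpow_add hd1, Real.rpow_sub hN, Real.div_rpow (by positivity) hC.le,
    Real.mul_rpow hd1.le hN.le, one_div, Real.rpow_one, Real.rpow_one]
  have : 0 < (d + 1) ^ d⁻¹ := Real.rpow_pos_of_pos hd1 _
  have : 0 < N ^ d⁻¹ := Real.rpow_pos_of_pos hN _
  have : 0 < C ^ d⁻¹ := Real.rpow_pos_of_pos hC _
  field_simp

theorem stmt_10_general {G : Type*} [Group G] (S : Set G)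
    (C d : ℝ) (hC : 0 < C) (hd : 1 ≤ d)
    (hgrowth : ∀ n : ℕ, 1 ≤ n → C * (n : ℝ) ^ d ≤ (growth S (n - 1) : ℝ))
    (D : Set G) (hDfin : D.Finite) (hDne : D.Nonempty) :
    ((intBoundary S D).ncard : ℝ) ≥
      C ^ (1 / d) * d / (d + 1) ^ ((d + 1) / d) * (D.ncard : ℝ) ^ ((d - 1) / d) := by
  have hd0 : 0 < d := by linarith
  have hN : (0 : ℝ) < D.ncard := by exact_mod_cast (Set.ncard_pos hDfin).mpr hDne
  set t := ((d + 1) * D.ncard / C) ^ d⁻¹ with ht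
  have hγ : (d + 1) * D.ncard ≤ growth S ⌊t⌋₊ := by
    simpa [mul_div_cancel₀ _ hC.ne'] using
      le_growth_floor_rpow hC.le hd0 hgrowth (y := (d + 1) * D.ncard / C) (by positivity)
  have hkey := mul_ncard_le_mul_ncard_intBoundary hDfin hDne hd0.le hγ
  have hnt : (⌊t⌋₊ : ℝ) ≤ t := Nat.floor_le (by positivity)
  rw [ge_iff_le, isoperimetric_constant_eq hC hd0 hN, ← ht, div_le_iff₀ (by positivity)]
  calc d * D.ncard ≤ (d + 1) * (⌊t⌋₊ * (intBoundary S D).ncard) := hkey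
    _ ≤ (d + 1) * (t * (intBoundary S D).ncard) := by gcongr
    _ = _ := by ring

theorem stmt_10 {G : Type*} [Group G] [Infinite G] (S : Set G) (hSfin : S.Finite)
    (hSsym : ∀ s ∈ S, s⁻¹ ∈ S) (hSgen : Subgroup.closure S = ⊤)
    (C d : ℝ) (hC : 0 < C) (hd : 1 ≤ d)
    (hgrowth : ∀ n : ℕ, 1 ≤ n → C * (n : ℝ) ^ d ≤ (growth S (n - 1) : ℝ))
    (D : Set G) (hDfin : D.Finite) (hDne : D.Nonempty) :
    ((intBoundary S D).ncard : ℝ) ≥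
      C ^ (1 / d) * d / (d + 1) ^ ((d + 1) / d) * (D.ncard : ℝ) ^ ((d - 1) / d) :=
  stmt_10_general S C d hC hd hgrowth D hDfin hDne
end

section
/- Let 0 < α ≤ 1, C > 0. For v ≥ (C/α)e^{(α−1)/α}, the unique solution λ(v) ≥ α of α·log(λv/C) = λ − 1 is given by λ(v) = −α·W₋₁(−C·e^{−1/α}/(α·v)), where W₋₁ is the branch of the Lambert W function mapping [−1/e, 0) to (−∞, −1]. -/
/-!
The substitution `w = -λ/α` turns `α log (λ v / C) = λ - 1` into
`w e^w = -C e^{-1/α} / (α v)`. The bound on `v` puts the right-hand side in `[-1/e, 0)`,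
and `λ ≥ α` means `w ≤ -1`; on `(-∞, -1]` the map `w ↦ w e^w` is strictly decreasing,
so `w` is the value of the branch `W₋₁` there.
-/

open Set Filter

open Real

lemma strictAntiOn_mul_exp_Iic_neg_one : StrictAntiOn (fun w : ℝ => w * exp w) (Iic (-1)) := by
  refine strictAntiOn_of_deriv_neg (convex_Iic _) (by fun_prop) fun w hw => ?_
  rw [interior_Iic] at hw
  have hderiv : HasDerivAt (fun w : ℝ => w * exp w) (1 * exp w + w * exp w) w :=
    (hasDerivAt_id w).mul (hasDerivAt_exp w)
  rw [hderiv.deriv]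
  nlinarith [exp_pos w, hw.out]

lemma neg_inv_exp_one_le_neg_mul_exp_div {α C v : ℝ} (hα : 0 < α) (hv0 : 0 < v)
    (hv : C / α * exp ((α - 1) / α) ≤ v) :
    -(exp 1)⁻¹ ≤ -(C * exp (-α⁻¹)) / (α * v) := by
  rw [neg_div, neg_le_neg_iff, div_le_iff₀ (by positivity), ← exp_neg]
  calc C * exp (-α⁻¹) = α * (C / α * exp ((α - 1) / α)) * exp (-1) := by
        rw [mul_assoc, mul_assoc, ← exp_add]
        field_simp
        ring_nf
    _ ≤ α * v * exp (-1) := by gcongr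
    _ = exp (-1) * (α * v) := mul_comm _ _

lemma mul_exp_neg_div_eq_of_mul_log_eq {α C v lam : ℝ} (hα : α ≠ 0) (hpos : 0 < lam * v / C)
    (heq : α * log (lam * v / C) = lam - 1) :
    (-lam / α) * exp (-lam / α) = -(C * exp (-α⁻¹)) / (α * v) := by
  have hexp : exp ((lam - 1) / α) = lam * v / C := by
    rw [← heq, mul_div_cancel_left₀ _ hα, exp_log hpos]
  have hsplit : exp (-lam / α) = exp (-α⁻¹) / exp ((lam - 1) / α) := by
    rw [← exp_sub]
    congr 1
    field_simp
    ring
  have hlam : lam ≠ 0 := by rintro rfl; simp at hpos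
  have hv : v ≠ 0 := by rintro rfl; simp at hpos
  have hC : C ≠ 0 := by rintro rfl; simp at hpos
  rw [hsplit, hexp]
  field_simp

theorem stmt_18_general (α C : ℝ) (hα : 0 < α) (hC : 0 < C)
    (W : ℝ → ℝ)
    (hW : ∀ x ∈ Ico (-(Real.exp 1)⁻¹) (0 : ℝ),
      W x ≤ -1 ∧ W x * Real.exp (W x) = x)
    (v lam : ℝ) (hv : (C / α) * Real.exp ((α - 1) / α) ≤ v)
    (hlam : α ≤ lam) (heq : α * Real.log (lam * v / C) = lam - 1) :
    lam = -α * W (-(C * Real.exp (-α⁻¹)) / (α * v)) := by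
  have hv0 : 0 < v := (by positivity : 0 < C / α * exp ((α - 1) / α)).trans_le hv
  have hlam0 : 0 < lam := hα.trans_le hlam
  set x := -(C * exp (-α⁻¹)) / (α * v)
  have hx : x ∈ Ico (-(exp 1)⁻¹) 0 :=
    ⟨neg_inv_exp_one_le_neg_mul_exp_div hα hv0 hv,
      div_neg_of_neg_of_pos (neg_neg_of_pos (by positivity)) (by positivity)⟩
  obtain ⟨hWx, hWx_eq⟩ := hW x hx
  have hw : -lam / α ≤ -1 := by rw [div_le_iff₀ hα]; linarith
  have hw_eq : -lam / α = W x := strictAntiOn_mul_exp_Iic_neg_one.injOn hw hWx <| by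
    rw [hWx_eq, mul_exp_neg_div_eq_of_mul_log_eq hα.ne' (by positivity) heq]
  field_simp at hw_eq
  linarith

theorem stmt_18 (α C : ℝ) (hα : 0 < α) (hα1 : α ≤ 1) (hC : 0 < C)
    (W : ℝ → ℝ)
    (hW : ∀ x ∈ Ico (-(Real.exp 1)⁻¹) (0 : ℝ),
      W x ≤ -1 ∧ W x * Real.exp (W x) = x)
    (v lam : ℝ) (hv : (C / α) * Real.exp ((α - 1) / α) ≤ v)
    (hlam : α ≤ lam) (heq : α * Real.log (lam * v / C) = lam - 1) :
    lam = -α * W (-(C * Real.exp (-α⁻¹)) / (α * v)) :=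
  stmt_18_general α C hα hC W hW v lam hv hlam heq
end
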